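/- For integers m, n ≥ 1, let P be a coarsening of the column set of (m+2)P_n with |P| = k ≥ 2, and let F be a symmetric subset of P². Let X and X' be distinct sets in P such that (X,X) ∈ F, (X',X') ∈ F, and (X,X') ∉ F. If the (P,F)-flip G of (m+2)P_n has a ⋃P-path from X to X' (a path in G with one end in X, the other end in X', and no internal vertex in ⋃_{Y∈P} Y), then G contains a (k−1)-flipped mP_n as a pivot-minor. -/

import Mathlib

open SimpleGraph

universe u v

/-! ### Basic graph operations: flips, local complementation, pivoting, pivot-minors -/

/-- Flip the adjacency of `G` exactly at the pairs of distinct vertices where the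
(symmetrized) predicate `p` holds. -/
def sdFlip {V : Type u} (G : SimpleGraph V) (p : V → V → Prop) : SimpleGraph V where
  Adj x y := x ≠ y ∧ Xor' (G.Adj x y) (p x y ∨ p y x)
  symm := by
    constructor
    intro x y h
    refine ⟨h.1.symm, ?_⟩
    have h2 := h.2
    rwa [G.adj_comm x y, or_comm] at h2
  loopless := by
    constructor
    intro x h
    exact h.1 rfl

/-- Local complementation `G * v`: complement the adjacency inside the neighborhood of `v`. -/
def localComp {V : Type u} (G : SimpleGraph V) (v : V) : SimpleGraph V :=
  sdFlip G (fun x y => G.Adj v x ∧ G.Adj v y)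

/-- Pivoting an edge `uv`: `G ∧ uv = G * u * v * u`. -/
def pivot {V : Type u} (G : SimpleGraph V) (u v : V) : SimpleGraph V :=
  localComp (localComp (localComp G u) v) u

/-- Applying a sequence of pivots. -/
def pivotSeq {V : Type u} (G : SimpleGraph V) : List (V × V) → SimpleGraph V
  | [] => G
  | e :: l => pivotSeq (pivot G e.1 e.2) l

/-- Each pivot in the sequence is performed on an edge of the current graph. -/
def ValidPivots {V : Type u} (G : SimpleGraph V) : List (V × V) → Prop
  | [] => True
  | e :: l => G.Adj e.1 e.2 ∧ ValidPivots (pivot G e.1 e.2) l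

/-- `H` is a pivot-minor of `G`: `H` is isomorphic to a graph obtained from `G` by a sequence of
pivotings (on edges of the current graph) and vertex deletions. -/
def IsPivotMinorOf {W : Type v} {V : Type u} (H : SimpleGraph W) (G : SimpleGraph V) : Prop :=
  ∃ (l : List (V × V)) (S : Set V), ValidPivots G l ∧
    Nonempty (H ≃g (pivotSeq G l).induce S)

/-! ### The half-graph join `G △ H` -/

/-- `G △ H`: the disjoint union of `G` and `H` together with the half graph joining them:
the `i`-th vertex of `G` is adjacent to the `j`-th vertex of `H` iff `i ≥ j`. -/
def halfJoin {n : ℕ} (G H : SimpleGraph (Fin n)) : SimpleGraph (Fin n ⊕ Fin n) where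
  Adj x y :=
    match x, y with
    | Sum.inl i, Sum.inl i' => G.Adj i i'
    | Sum.inr j, Sum.inr j' => H.Adj j j'
    | Sum.inl i, Sum.inr j => j ≤ i
    | Sum.inr j, Sum.inl i => j ≤ i
  symm := by
    constructor
    rintro (i | i) (j | j) h
    · exact G.adj_symm h
    · exact h
    · exact h
    · exact H.adj_symm h
  loopless := by
    constructor
    rintro (i | i) h
    · exact G.irrefl h
    · exact H.irrefl h

/-! ### Flips by a set, by a pair of sets, and by a collection of sets -/

/-- The `X`-flip of `G`: complement the adjacency inside `X`. (The `∅`-flip is `G` itself.) -/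
def setFlip {V : Type u} (G : SimpleGraph V) (X : Set V) : SimpleGraph V :=
  sdFlip G (fun x y => x ∈ X ∧ y ∈ X)

/-- `G * (X, Y)`: complement the adjacency between `X` and `Y`. -/
def pairFlip {V : Type u} (G : SimpleGraph V) (X Y : Set V) : SimpleGraph V :=
  sdFlip G (fun x y => x ∈ X ∧ y ∈ Y)

open Classical in
/-- The member of the collection `P` containing `v`, if any, and `{v}` otherwise. -/
noncomputable def blockOf {V : Type u} (P : Set (Set V)) (v : V) : Set V :=
  if h : ∃ X ∈ P, v ∈ X then h.choose else {v}

/-- A subset `F ⊆ P²` is symmetric if `(X,X') ∈ F` implies `(X',X) ∈ F`. -/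
def SymmRelSet {α : Type u} (F : Set (α × α)) : Prop :=
  ∀ a b : α, (a, b) ∈ F → (b, a) ∈ F

/-- The `(P,F)`-flip `H ⊕ (P,F)` of `H`: distinct vertices `u,v` are adjacent iff
`H.Adj u v` XOR `(P(u), P(v)) ∈ F`. -/
noncomputable def collFlip {V : Type u} (H : SimpleGraph V) (P : Set (Set V))
    (F : Set (Set V × Set V)) : SimpleGraph V :=
  sdFlip H (fun x y => (blockOf P x, blockOf P y) ∈ F)

/-- `P` is a collection of pairwise disjoint non-empty subsets. -/
def IsDisjNonemptyColl {V : Type u} (P : Set (Set V)) : Prop :=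
  (∀ X ∈ P, X.Nonempty) ∧ P.PairwiseDisjoint id

/-- `Q` is a coarsening of `P`: a collection of disjoint non-empty sets,
each a union of members of `P`. -/
def IsCoarsening {α : Type u} (Q P : Set (Set α)) : Prop :=
  IsDisjNonemptyColl Q ∧ ∀ X ∈ Q, ∃ C ⊆ P, X = ⋃₀ C

/-! ### The graph `mPₙ` and flipped `mPₙ`'s -/

/-- `mPₙ`: the disjoint union of `m` copies of the path `Pₙ`, with vertex set `[m] × [n]`. -/
def pathsGraph (m n : ℕ) : SimpleGraph (Fin m × Fin n) where
  Adj x y := x.1 = y.1 ∧ (pathGraph n).Adj x.2 y.2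
  symm := by
    constructor
    rintro ⟨i, a⟩ ⟨j, b⟩ ⟨h1, h2⟩
    exact ⟨h1.symm, (pathGraph n).adj_symm h2⟩
  loopless := by
    constructor
    rintro ⟨i, a⟩ ⟨_, h⟩
    exact (pathGraph n).irrefl h

/-- The `j`-th column of `mPₙ`. -/
def column (m n : ℕ) (j : Fin n) : Set (Fin m × Fin n) := {p | p.2 = j}

/-- The column set of `mPₙ`. -/
def columnSet (m n : ℕ) : Set (Set (Fin m × Fin n)) := Set.range (column m n)

/-- A flipped `mPₙ`: a `P`-flip of `mPₙ` where `P` is a coarsening of the column set. -/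
def IsFlippedPaths (m n : ℕ) (G : SimpleGraph (Fin m × Fin n)) : Prop :=
  ∃ (P : Set (Set (Fin m × Fin n))) (F : Set (Set (Fin m × Fin n) × Set (Fin m × Fin n))),
    IsCoarsening P (columnSet m n) ∧ F ⊆ P ×ˢ P ∧ SymmRelSet F ∧
    G = collFlip (pathsGraph m n) P F

/-- A `k`-flipped `mPₙ`: a flipped `mPₙ` with `|P| ≤ k`. -/
def IsKFlippedPaths (k m n : ℕ) (G : SimpleGraph (Fin m × Fin n)) : Prop :=
  ∃ (P : Set (Set (Fin m × Fin n))) (F : Set (Set (Fin m × Fin n) × Set (Fin m × Fin n))),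
    IsCoarsening P (columnSet m n) ∧ P.ncard ≤ k ∧ F ⊆ P ×ˢ P ∧ SymmRelSet F ∧
    G = collFlip (pathsGraph m n) P F

/-! ### Cut-rank and rank-depth -/

open Classical in
/-- The cut-rank `ρ_G(S)`: the rank over GF(2) of the `S × (V ∖ S)` submatrix of the
adjacency matrix of `G`. -/
noncomputable def cutRank {V : Type u} [Fintype V] (G : SimpleGraph V) (S : Set V) : ℕ :=
  Matrix.rank (Matrix.of fun (i : S) (j : (Sᶜ : Set V)) =>
    if G.Adj (i : V) (j : V) then (1 : ZMod 2) else 0)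

/-- The rank-depth of `G`: the least `k` such that `G` has a decomposition `(T, σ)` into a
tree `T` with the vertices of `G` identified with the leaves of `T` via `σ`, of width at
most `k` and radius at most `k`.  The width condition is expressed as: for every non-leaf
node `v` of `T` and every set `S ⊆ V(G)` that is a union of parts of the partition of `V(G)`
induced by the components of `T - v`, we have `ρ_G(S) ≤ k`. -/
noncomputable def rankDepth {V : Type u} [Fintype V] (G : SimpleGraph V) : ℕ :=
  sInf {k : ℕ |
    ∃ (N : ℕ) (T : SimpleGraph (Fin N))
      (σ : V ≃ {x : Fin N // (T.neighborSet x).ncard ≤ 1}),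
      T.IsTree ∧
      (∃ c : Fin N, ∀ x : Fin N, T.dist c x ≤ k) ∧
      (∀ x : Fin N, 1 < (T.neighborSet x).ncard →
        ∀ S : Set V,
          (∀ a b : V, a ∈ S →
            (∃ w : T.Walk ((σ a : {x : Fin N // (T.neighborSet x).ncard ≤ 1}) : Fin N)
                ((σ b : {x : Fin N // (T.neighborSet x).ncard ≤ 1}) : Fin N),
              x ∉ w.support) → b ∈ S) →
          cutRank G S ≤ k)}

/-! ### Restrictions of collections, and the sets `C_F`, `L_F`, `R_F`, `D_F` -/

/-- The restriction `P|_{S}` of a collection of subsets of `V` to a subset `S`. -/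
def restrictColl {V : Type u} (P : Set (Set V)) (S : Set V) : Set (Set S) :=
  {Y | ∃ X ∈ P, (Subtype.val ⁻¹' X : Set S).Nonempty ∧ Y = (Subtype.val ⁻¹' X : Set S)}

/-- The restriction `F|_{S}` of a collection of pairs of subsets of `V` to a subset `S`. -/
def restrictF {V : Type u} (F : Set (Set V × Set V)) (S : Set V) : Set (Set S × Set S) :=
  {q | ∃ p ∈ F, (Subtype.val ⁻¹' p.1 : Set S).Nonempty ∧ (Subtype.val ⁻¹' p.2 : Set S).Nonempty ∧
      q = ((Subtype.val ⁻¹' p.1 : Set S), (Subtype.val ⁻¹' p.2 : Set S))}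

/-- `C_F(X,X') = {Y ∈ P : (X,Y) ∈ F and (X',Y) ∈ F}`. -/
def CF {V : Type u} (P : Set (Set V)) (F : Set (Set V × Set V)) (X X' : Set V) : Set (Set V) :=
  {Y ∈ P | (X, Y) ∈ F ∧ (X', Y) ∈ F}

/-- `L_F(X,X') = {Y ∈ P : (X,Y) ∈ F and (X',Y) ∉ F}`. -/
def LF {V : Type u} (P : Set (Set V)) (F : Set (Set V × Set V)) (X X' : Set V) : Set (Set V) :=
  {Y ∈ P | (X, Y) ∈ F ∧ (X', Y) ∉ F}

/-- `R_F(X,X') = {Y ∈ P : (X,Y) ∉ F and (X',Y) ∈ F}`. -/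
def RF {V : Type u} (P : Set (Set V)) (F : Set (Set V × Set V)) (X X' : Set V) : Set (Set V) :=
  {Y ∈ P | (X, Y) ∉ F ∧ (X', Y) ∈ F}

/-- `D_F(X,X') = (C×L) ∪ (C×R) ∪ (L×R) ∪ (L×C) ∪ (R×C) ∪ (R×L)`. -/
def DF {V : Type u} (P : Set (Set V)) (F : Set (Set V × Set V)) (X X' : Set V) :
    Set (Set V × Set V) :=
  (CF P F X X' ×ˢ LF P F X X') ∪ (CF P F X X' ×ˢ RF P F X X') ∪ (LF P F X X' ×ˢ RF P F X X') ∪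
  (LF P F X X' ×ˢ CF P F X X') ∪ (RF P F X X' ×ˢ CF P F X X') ∪ (RF P F X X' ×ˢ LF P F X X')

/-- The set of `t` consecutive vertices of the path `P_s` starting at position `i` (0-indexed). -/
def consec (s i t : ℕ) : Set (Fin s) := {x | i ≤ (x : ℕ) ∧ (x : ℕ) < i + t}

/-- An `(s,t)`-path: a graph isomorphic to the `X`-flip of `P_s` for a set `X` of `t`
consecutive vertices of `P_s`. -/
def IsSTPath (s t : ℕ) {W : Type v} (G : SimpleGraph W) : Prop :=
  ∃ i : ℕ, i + t ≤ s ∧ Nonempty (G ≃g setFlip (pathGraph s) (consec s i t))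

/-!
The path `p = v 0, …, v L = q` has no inner vertex in a part and `(X, X') ∉ F`, so it is a path
of `(m+2)Pₙ`: it is induced and lies in one row `i`. Delete row `i` and one further row `i'`.
In the remaining rows `v 0` sees exactly the vertices whose part is `F`-related to `X`, `v L`
those related to `X'`, and the inner vertices see nothing. If `L` is even, first prepend the
vertex of `X` in row `i'` below `p`: it is adjacent to `p` as `(X, X) ∈ F` and sees what `p` sees.
Pivoting on every other edge of this odd path flips exactly the pairs between those two sets.
As `(X, X), (X', X') ∈ F` and `(X, X') ∉ F`, the resulting flip relation between parts does not
distinguish `X` from `X'`; merging them shows the remaining `m` rows to be a `(k-1)`-flipped `mPₙ`.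
-/

section Pivot

variable {V : Type*} {G : SimpleGraph V}

@[simp] lemma sdFlip_adj (p : V → V → Prop) (x y : V) :
    (sdFlip G p).Adj x y ↔ x ≠ y ∧ Xor (G.Adj x y) (p x y ∨ p y x) := Iff.rfl

lemma localComp_adj_of_ne {v x y : V} (hxy : x ≠ y) :
    (localComp G v).Adj x y ↔ Xor (G.Adj x y) (G.Adj v x ∧ G.Adj v y) := by
  simp [localComp, hxy, and_comm]

lemma localComp_adj_left {v x : V} : (localComp G v).Adj v x ↔ G.Adj v x := by
  by_cases hvx : v = x
  · simp [hvx]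
  · simp [localComp_adj_of_ne hvx, xor_def]

lemma pivot_adj_of_ne {a b x y : V} (hab : G.Adj a b)
    (hxa : x ≠ a) (hxb : x ≠ b) (hya : y ≠ a) (hyb : y ≠ b) :
    (pivot G a b).Adj x y ↔
      Xor (G.Adj x y) (Xor (G.Adj a x ∧ G.Adj b y) (G.Adj b x ∧ G.Adj a y)) := by
  by_cases hxy : x = y
  · subst hxy
    simp [and_comm]
  have hb : ∀ z, z ≠ a → z ≠ b → ((localComp G a).Adj b z ↔ Xor (G.Adj b z) (G.Adj a z)) := by
    intro z hza hzb
    rw [localComp_adj_of_ne (Ne.symm hzb)]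
    simp [hab]
  have ha : ∀ z, z ≠ a → z ≠ b → ((localComp (localComp G a) b).Adj a z ↔ G.Adj b z) := by
    intro z hza hzb
    rw [localComp_adj_of_ne (Ne.symm hza), localComp_adj_left, hb z hza hzb,
      (localComp G a).adj_comm b a, localComp_adj_left]
    grind
  rw [pivot, localComp_adj_of_ne hxy, localComp_adj_of_ne hxy, localComp_adj_of_ne hxy,
    ha x hxa hxb, ha y hya hyb, hb x hxa hxb, hb y hya hyb]
  grind

end Pivot

section PivotPath

variable {V : Type*}

/-- An induced path outside `S` along which pivoting flips `A` against `B` inside `S`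
(`exists_validPivots`). The second option of `adj_second` allows prepending a twin of `u 0`. -/
structure IsPivotPath (G : SimpleGraph V) (S A B : Set V) (L : ℕ) (u : ℕ → V) : Prop where
  injOn : Set.InjOn u {j | j ≤ L}
  notMem : ∀ j ≤ L, u j ∉ S
  adj : ∀ j < L, G.Adj (u j) (u (j + 1))
  not_adj : ∀ j k, k ≤ L → j + 2 ≤ k → ¬ G.Adj (u j) (u k)
  adj_first : ∀ x ∈ S, G.Adj (u 0) x ↔ x ∈ A
  adj_second : 1 < L → (∀ x ∈ S, ¬ G.Adj (u 1) x) ∨ ∀ x ∈ S, G.Adj (u 1) x ↔ x ∈ A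
  not_adj_inner : ∀ j, 2 ≤ j → j < L → ∀ x ∈ S, ¬ G.Adj (u j) x
  adj_last : ∀ x ∈ S, G.Adj (u L) x ↔ x ∈ B

namespace IsPivotPath

variable {G : SimpleGraph V} {S A B : Set V} {L : ℕ} {u : ℕ → V}

lemma ne_of_mem (h : IsPivotPath G S A B L u) {j : ℕ} (hj : j ≤ L) {x : V} (hx : x ∈ S) :
    x ≠ u j :=
  fun e => h.notMem j hj (e ▸ hx)

lemma ne_of_le (h : IsPivotPath G S A B L u) {j k : ℕ} (hj : j ≤ L) (hk : k ≤ L) (hjk : j ≠ k) :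
    u j ≠ u k :=
  fun e => hjk (h.injOn hj hk e)

lemma pivot_adj_iff_of_mem (h : IsPivotPath G S A B L u) (hL : 1 < L) {x y : V}
    (hx : x ∈ S) (hy : y ∈ S) : (pivot G (u 0) (u 1)).Adj x y ↔ G.Adj x y := by
  rw [pivot_adj_of_ne (h.adj 0 (by omega)) (h.ne_of_mem (by omega) hx)
    (h.ne_of_mem (by omega) hx) (h.ne_of_mem (by omega) hy) (h.ne_of_mem (by omega) hy),
    h.adj_first x hx, h.adj_first y hy]
  rcases h.adj_second hL with h1 | h1
  · simp [h1 x hx, h1 y hy, xor_def]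
  · rw [h1 x hx, h1 y hy]
    grind

lemma cons (h : IsPivotPath G S A B L u) (h1 : 1 < L → ∀ x ∈ S, ¬ G.Adj (u 1) x) {z : V}
    (hz : z ∉ S) (hzu : ∀ j ≤ L, z ≠ u j) (hz0 : G.Adj z (u 0))
    (hzu' : ∀ j, 1 ≤ j → j ≤ L → ¬ G.Adj z (u j)) (hzA : ∀ x ∈ S, G.Adj z x ↔ x ∈ A) :
    IsPivotPath G S A B (L + 1) (fun | 0 => z | j + 1 => u j) := by
  refine ⟨?_, ?_, ?_, ?_, hzA, fun _ => Or.inr h.adj_first, ?_, h.adj_last⟩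
  · rintro (_ | j) hj (_ | k) hk e
    · rfl
    · exact absurd e (hzu k (Nat.le_of_succ_le_succ hk))
    · exact absurd e.symm (hzu j (Nat.le_of_succ_le_succ hj))
    · rw [h.injOn (Nat.le_of_succ_le_succ hj) (Nat.le_of_succ_le_succ hk) e]
  · rintro (_ | j) hj
    exacts [hz, h.notMem j (by omega)]
  · rintro (_ | j) hj
    exacts [hz0, h.adj j (by omega)]
  · rintro (_ | j) (_ | k) hk hjk
    exacts [absurd hjk (by omega), hzu' k (by omega) (by omega), absurd hjk (by omega),
      h.not_adj j k (by omega) (by omega)]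
  · rintro (_ | _ | _ | j) h2 hj
    exacts [absurd h2 (by omega), absurd h2 (by omega), h1 (by omega),
      h.not_adj_inner (j + 2) le_add_self (by omega)]

lemma pivot_drop_two (h : IsPivotPath G S A B (L + 3) u) :
    IsPivotPath (pivot G (u 0) (u 1)) S A B (L + 1) (fun j => u (j + 2)) := by
  have hne : ∀ j, 2 ≤ j → j ≤ L + 3 → u j ≠ u 0 ∧ u j ≠ u 1 := fun j h2 hj =>
    ⟨h.ne_of_le hj (by omega) (by omega), h.ne_of_le hj (by omega) (by omega)⟩
  have hS : ∀ x ∈ S, x ≠ u 0 ∧ x ≠ u 1 := fun x hx =>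
    ⟨h.ne_of_mem (by omega) hx, h.ne_of_mem (by omega) hx⟩
  have hpiv := fun {x y : V} (hx : x ≠ u 0 ∧ x ≠ u 1) (hy : y ≠ u 0 ∧ y ≠ u 1) =>
    pivot_adj_of_ne (h.adj 0 (by omega)) hx.1 hx.2 hy.1 hy.2
  have h0 : ∀ j, 2 ≤ j → j ≤ L + 3 → ¬ G.Adj (u 0) (u j) := fun j h2 hj =>
    h.not_adj 0 j hj (by omega)
  have h1 : ∀ j, 3 ≤ j → j ≤ L + 3 → ¬ G.Adj (u 1) (u j) := fun j h3 hj =>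
    h.not_adj 1 j hj (by omega)
  refine ⟨fun j hj k hk e => ?_, fun j hj => h.notMem (j + 2) (by omega), fun j hj => ?_,
    fun j k hk hjk => ?_, fun x hx => ?_, fun hL => Or.inl fun x hx => ?_,
    fun j h2 hj x hx => ?_, fun x hx => ?_⟩
  · have := h.injOn (Nat.add_le_add_right hj 2) (Nat.add_le_add_right hk 2) e
    omega
  · rw [hpiv (hne _ (by omega) (by omega)) (hne _ (by omega) (by omega))]
    simp [h0 (j + 2) (by omega) (by omega), h0 (j + 3) (by omega) (by omega),
      h1 (j + 3) (by omega) (by omega), h.adj (j + 2) (by omega)]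
  · rw [hpiv (hne _ (by omega) (by omega)) (hne _ (by omega) (by omega))]
    simp [h0 (j + 2) (by omega) (by omega), h0 (k + 2) (by omega) (by omega),
      h.not_adj (j + 2) (k + 2) (by omega) (by omega)]
  · rw [hpiv (hne 2 le_rfl (by omega)) (hS x hx), ← h.adj_first x hx]
    simp [h0 2 le_rfl (by omega), h.adj 1 (by omega), h.not_adj_inner 2 le_rfl (by omega) x hx]
  · rw [hpiv (hne 3 (by omega) (by omega)) (hS x hx)]
    simp [h0 3 (by omega) (by omega), h1 3 le_rfl (by omega),
      h.not_adj_inner 3 (by omega) (by omega) x hx]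
  · rw [hpiv (hne _ (by omega) (by omega)) (hS x hx)]
    simp [h0 (j + 2) (by omega) (by omega), h1 (j + 2) (by omega) (by omega),
      h.not_adj_inner (j + 2) (by omega) (by omega) x hx]
  · rw [hpiv (hne (L + 3) (by omega) le_rfl) (hS x hx), ← h.adj_last x hx]
    simp [h0 (L + 3) (by omega) le_rfl, h1 (L + 3) (by omega) le_rfl, xor_def]

lemma pivot_adj_of_length_one (h : IsPivotPath G S A B 1 u) {x y : V} (hx : x ∈ S)
    (hy : y ∈ S) : (pivot G (u 0) (u 1)).Adj x y ↔
      Xor (G.Adj x y) (Xor (x ∈ A ∧ y ∈ B) (x ∈ B ∧ y ∈ A)) := by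
  rw [pivot_adj_of_ne (h.adj 0 one_pos) (h.ne_of_mem (by omega) hx) (h.ne_of_mem le_rfl hx)
    (h.ne_of_mem (by omega) hy) (h.ne_of_mem le_rfl hy), h.adj_first x hx, h.adj_first y hy,
    h.adj_last x hx, h.adj_last y hy]

theorem exists_validPivots {t : ℕ} (h : IsPivotPath G S A B (2 * t + 1) u) :
    ∃ l, ValidPivots G l ∧ ∀ x ∈ S, ∀ y ∈ S,
      ((pivotSeq G l).Adj x y ↔ Xor (G.Adj x y) (Xor (x ∈ A ∧ y ∈ B) (x ∈ B ∧ y ∈ A))) := by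
  induction t generalizing G u with
  | zero => exact ⟨[(u 0, u 1)], ⟨h.adj 0 one_pos, trivial⟩, fun x hx y hy =>
      h.pivot_adj_of_length_one hx hy⟩
  | succ t ih =>
    obtain ⟨l, hl, hflip⟩ := ih (h.pivot_drop_two (L := 2 * t))
    refine ⟨(u 0, u 1) :: l, ⟨h.adj 0 (by omega), hl⟩, fun x hx y hy => ?_⟩
    rw [pivotSeq, hflip x hx y hy, h.pivot_adj_iff_of_mem (by omega) hx hy]

end IsPivotPath

end PivotPath

section PathGraph

lemma pathGraph_not_adj_of_injOn {n L : ℕ} {c : ℕ → Fin n}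
    (hadj : ∀ j < L, (pathGraph n).Adj (c j) (c (j + 1))) (hinj : Set.InjOn c {j | j ≤ L})
    {j k : ℕ} (hk : k ≤ L) (hjk : j + 2 ≤ k) : ¬ (pathGraph n).Adj (c j) (c k) := by
  have hstep : ∀ j < L, (c j : ℕ) + 1 = c (j + 1) ∨ (c (j + 1) : ℕ) + 1 = c j :=
    fun j hj => pathGraph_adj.1 (hadj j hj)
  -- a change of direction would revisit a vertex
  have hsame : ∀ j < L, ((c j : ℕ) + 1 = c (j + 1) ↔ (c 0 : ℕ) + 1 = c 1) := by
    intro j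
    induction j with
    | zero => intro; rfl
    | succ j ih =>
      intro hj
      have hne : (c (j + 1 + 1) : ℕ) ≠ c j := fun e => by
        have := hinj (show j + 1 + 1 ≤ L by omega) (show j ≤ L by omega) (Fin.ext e)
        omega
      have h1 := hstep j (by omega)
      have h2 := hstep (j + 1) hj
      have h3 := ih (by omega)
      omega
  have hlin : ∀ j ≤ L, ((c 0 : ℕ) + 1 = c 1 → (c j : ℕ) = c 0 + j) ∧
      ((c 0 : ℕ) + 1 ≠ c 1 → (c j : ℕ) + j = c 0) := by
    intro j
    induction j with
    | zero => intro; simp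
    | succ j ih =>
      intro hj
      have := hsame j (by omega)
      have := hstep j (by omega)
      have := ih (by omega)
      omega
  have := hlin j (by omega)
  have := hlin k hk
  rw [pathGraph_adj]
  omega

variable {m n : ℕ}

@[simp] lemma pathsGraph_adj (x y : Fin m × Fin n) :
    (pathsGraph m n).Adj x y ↔ x.1 = y.1 ∧ (pathGraph n).Adj x.2 y.2 := Iff.rfl

lemma pathsGraph_fst_eq_of_adj {L : ℕ} {v : ℕ → Fin m × Fin n}
    (hadj : ∀ j < L, (pathsGraph m n).Adj (v j) (v (j + 1))) : ∀ j ≤ L, (v j).1 = (v 0).1 := by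
  intro j
  induction j with
  | zero => intro; rfl
  | succ j ih => intro hj; rw [← ih (by omega), (hadj j (by omega)).1]

lemma pathsGraph_not_adj_of_injOn {L : ℕ} {v : ℕ → Fin m × Fin n}
    (hadj : ∀ j < L, (pathsGraph m n).Adj (v j) (v (j + 1))) (hinj : Set.InjOn v {j | j ≤ L})
    {j k : ℕ} (hk : k ≤ L) (hjk : j + 2 ≤ k) : ¬ (pathsGraph m n).Adj (v j) (v k) := by
  have hrow := pathsGraph_fst_eq_of_adj hadj
  refine fun h => pathGraph_not_adj_of_injOn (c := fun j => (v j).2) (fun j hj => (hadj j hj).2)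
    (fun i hi i' hi' e => hinj hi hi' (Prod.ext ?_ e)) hk hjk h.2
  rw [hrow i hi, hrow i' hi']

end PathGraph

section CollFlip

variable {V : Type*} {P : Set (Set V)} {F : Set (Set V × Set V)} {Y : Set V} {v : V}

lemma mem_blockOf (P : Set (Set V)) (v : V) : v ∈ blockOf P v := by
  unfold blockOf
  split_ifs with h
  exacts [h.choose_spec.2, rfl]

lemma blockOf_eq_of_mem (hP : P.PairwiseDisjoint id) (hY : Y ∈ P) (hv : v ∈ Y) :
    blockOf P v = Y := by
  have h : ∃ Y ∈ P, v ∈ Y := ⟨Y, hY, hv⟩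
  rw [blockOf, dif_pos h]
  by_contra hne
  exact Set.not_disjoint_iff.2 ⟨v, h.choose_spec.2, hv⟩ (hP h.choose_spec.1 hY hne)

lemma blockOf_mem (hP : P.PairwiseDisjoint id) (hv : v ∈ ⋃₀ P) : blockOf P v ∈ P := by
  obtain ⟨Y, hY, hvY⟩ := hv
  rwa [blockOf_eq_of_mem hP hY hvY]

lemma pair_blockOf_notMem_left (hFP : F ⊆ P ×ˢ P) (hv : v ∉ ⋃₀ P) (Y : Set V) :
    (blockOf P v, Y) ∉ F :=
  fun h => hv ⟨_, (hFP h).1, mem_blockOf P v⟩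

lemma pair_blockOf_notMem_right (hFP : F ⊆ P ×ˢ P) (hv : v ∉ ⋃₀ P) (Y : Set V) :
    (Y, blockOf P v) ∉ F :=
  fun h => hv ⟨_, (hFP h).2, mem_blockOf P v⟩

variable {H : SimpleGraph V} {x y : V}

lemma collFlip_adj (hF : SymmRelSet F) :
    (collFlip H P F).Adj x y ↔ x ≠ y ∧ Xor (H.Adj x y) ((blockOf P x, blockOf P y) ∈ F) := by
  simp only [collFlip, sdFlip_adj, or_iff_left_of_imp (hF _ _)]

lemma collFlip_adj_iff_of_notMem (hF : SymmRelSet F) (h : (blockOf P x, blockOf P y) ∉ F) :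
    (collFlip H P F).Adj x y ↔ H.Adj x y := by
  rw [collFlip_adj hF]
  simp only [h, xor_def]
  exact ⟨fun h => by tauto, fun h' => ⟨h'.ne, by tauto⟩⟩

lemma collFlip_adj_iff_of_not_adj (hF : SymmRelSet F) (hxy : x ≠ y) (hH : ¬ H.Adj x y) :
    (collFlip H P F).Adj x y ↔ (blockOf P x, blockOf P y) ∈ F := by
  simp [collFlip_adj hF, hxy, hH, xor_def]

end CollFlip

lemma IsCoarsening.mem_of_snd_eq {N n : ℕ} {P : Set (Set (Fin N × Fin n))}
    (hP : IsCoarsening P (columnSet N n)) {Y : Set (Fin N × Fin n)} (hY : Y ∈ P)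
    {z z' : Fin N × Fin n} (hz : z ∈ Y) (h : z.2 = z'.2) : z' ∈ Y := by
  obtain ⟨C, hC, rfl⟩ := hP.2 Y hY
  obtain ⟨_, hc, hzc⟩ := hz
  obtain ⟨j, rfl⟩ := hC hc
  exact ⟨_, hc, h.symm.trans hzc⟩

/-- Each label in use becomes one part, a union of columns; `none` marks the vertices in no
part. -/
theorem isKFlippedPaths_of_adj_iff {ι : Type*} {k m n : ℕ} (G : SimpleGraph (Fin m × Fin n))
    (κ : Fin m × Fin n → Option ι) (hκ : ∀ x y, x.2 = y.2 → κ x = κ y)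
    (r : ι → ι → Prop) (hr : ∀ a b, r a b → r b a) (hk : {a | some a ∈ Set.range κ}.ncard ≤ k)
    (hG : ∀ x y, G.Adj x y ↔
      x ≠ y ∧ Xor ((pathsGraph m n).Adj x y) (∃ a ∈ κ x, ∃ b ∈ κ y, r a b)) :
    IsKFlippedPaths k m n G := by
  set I := {a | some a ∈ Set.range κ}
  set block : ι → Set (Fin m × Fin n) := fun a => {x | κ x = some a}
  set Q := block '' I
  set Fq := (fun ab : ι × ι => (block ab.1, block ab.2)) '' {ab | ab.1 ∈ I ∧ ab.2 ∈ I ∧ r ab.1 ab.2}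
  have hdisj : Q.PairwiseDisjoint id := by
    rintro _ ⟨a, -, rfl⟩ _ ⟨b, -, rfl⟩ hne
    refine Set.disjoint_left.2 fun x (hxa : κ x = some a) (hxb : κ x = some b) => hne ?_
    rw [Option.some_injective _ (hxa.symm.trans hxb)]
  have hblock : ∀ x a, block a = blockOf Q x ↔ κ x = some a := fun x a =>
    ⟨fun h => (h ▸ mem_blockOf Q x : x ∈ block a), fun h =>
      (blockOf_eq_of_mem hdisj ⟨a, ⟨x, h⟩, rfl⟩ (show κ x = some a from h)).symm⟩
  have hFsymm : SymmRelSet Fq := by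
    rintro _ _ ⟨⟨a, b⟩, ⟨ha, hb, hab⟩, h⟩
    obtain ⟨rfl, rfl⟩ := Prod.mk.inj h
    exact ⟨(b, a), ⟨hb, ha, hr a b hab⟩, rfl⟩
  refine ⟨Q, Fq, ⟨⟨?_, hdisj⟩, ?_⟩, (Set.ncard_image_le ?_).trans hk, ?_, hFsymm, ?_⟩
  · rintro _ ⟨a, ⟨x, hx⟩, rfl⟩
    exact ⟨x, hx⟩
  · rintro _ ⟨a, -, rfl⟩
    refine ⟨{c ∈ columnSet m n | c ⊆ block a}, fun c hc => hc.1, ?_⟩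
    ext x
    refine ⟨fun hx => ⟨column m n x.2, ⟨⟨x.2, rfl⟩, fun y hy => ?_⟩, rfl⟩, ?_⟩
    · exact (hκ y x hy).trans hx
    · rintro ⟨c, hc, hxc⟩
      exact hc.2 hxc
  · exact (Set.finite_range κ).preimage (Option.some_injective _).injOn
  · rintro _ ⟨⟨a, b⟩, ⟨ha, hb, -⟩, rfl⟩
    exact ⟨⟨a, ha, rfl⟩, ⟨b, hb, rfl⟩⟩
  · ext x y
    rw [hG, collFlip_adj hFsymm]
    simp only [Fq, I, Set.mem_image, Set.mem_ofPred_eq, Prod.ext_iff, hblock, Prod.exists,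
      Option.mem_def]
    grind

section PivotRel

variable {α : Type*} {R : α → α → Prop} {a b : α}

variable (R) in
/-- The flip relation between parts after pivoting along a path from part `a` to part `b`. -/
def pivotRel (a b Y Z : α) : Prop :=
  Xor (R Y Z) (Xor (R a Y ∧ R b Z) (R b Y ∧ R a Z))

lemma pivotRel_symm (hR : ∀ Y Z, R Y Z → R Z Y) {Y Z : α} (h : pivotRel R a b Y Z) :
    pivotRel R a b Z Y := by
  have := hR Y Z
  have := hR Z Y
  unfold pivotRel at *
  grind

lemma pivotRel_right_iff_left (hR : ∀ Y Z, R Y Z → R Z Y) (haa : R a a) (hbb : R b b)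
    (hab : ¬ R a b) (Z : α) : pivotRel R a b b Z ↔ pivotRel R a b a Z := by
  have := hR b a
  have := hR Z a
  have := hR Z b
  have := hR a Z
  have := hR b Z
  unfold pivotRel
  grind

lemma pivotRel_merge_iff [DecidableEq α] (hR : ∀ Y Z, R Y Z → R Z Y) (haa : R a a)
    (hbb : R b b) (hab : ¬ R a b) (Y Z : α) :
    pivotRel R a b (if Y = b then a else Y) (if Z = b then a else Z) ↔ pivotRel R a b Y Z := by
  have hleft := pivotRel_right_iff_left hR haa hbb hab
  have hright : ∀ Y, pivotRel R a b Y b ↔ pivotRel R a b Y a := fun Y =>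
    ⟨fun h => pivotRel_symm hR ((hleft Y).1 (pivotRel_symm hR h)),
      fun h => pivotRel_symm hR ((hleft Y).2 (pivotRel_symm hR h))⟩
  split_ifs with hY hZ hZ
  · rw [hY, hZ]; exact (hleft a).symm.trans (hright b).symm
  · rw [hY]; exact (hleft Z).symm
  · rw [hZ]; exact (hright Y).symm
  · rfl

end PivotRel

lemma collFlip_adj_xor_iff {V : Type*} {P : Set (Set V)} {F : Set (Set V × Set V)}
    (hFsymm : SymmRelSet F) (H : SimpleGraph V) (X X' : Set V) (x y : V) :
    Xor ((collFlip H P F).Adj x y) (Xor ((X, blockOf P x) ∈ F ∧ (X', blockOf P y) ∈ F)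
      ((X', blockOf P x) ∈ F ∧ (X, blockOf P y) ∈ F)) ↔
      x ≠ y ∧ Xor (H.Adj x y)
        (pivotRel (fun Y Z => (Y, Z) ∈ F) X X' (blockOf P x) (blockOf P y)) := by
  rw [collFlip_adj hFsymm]
  by_cases hxy : x = y
  · subst hxy
    simp [xor_def, and_comm]
  · simp only [ne_eq, hxy, not_false_eq_true, true_and, pivotRel]
    grind

section MergedBlock

variable {V : Type*} {P : Set (Set V)} {F : Set (Set V × Set V)} {X X' : Set V}

open Classical in
noncomputable def mergedBlock (P : Set (Set V)) (X X' : Set V) (z : V) : Option (Set V) :=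
  if z ∈ ⋃₀ P then some (if blockOf P z = X' then X else blockOf P z) else none

lemma mem_diff_of_mem_mergedBlock (hP : P.PairwiseDisjoint id) (hX : X ∈ P) (hXX' : X ≠ X')
    {z : V} {a : Set V} (h : a ∈ mergedBlock P X X' z) : a ∈ P \ {X'} := by
  unfold mergedBlock at h
  split_ifs at h with hz hzX' <;> cases h
  exacts [⟨hX, hXX'⟩, ⟨blockOf_mem hP hz, hzX'⟩]

lemma pivotRel_blockOf_iff (hFP : F ⊆ P ×ˢ P) (hFsymm : SymmRelSet F) (hXF : (X, X) ∈ F)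
    (hX'F : (X', X') ∈ F) (hXX'F : (X, X') ∉ F) (z z' : V) :
    pivotRel (fun Y Z => (Y, Z) ∈ F) X X' (blockOf P z) (blockOf P z') ↔
      ∃ a ∈ mergedBlock P X X' z, ∃ b ∈ mergedBlock P X X' z',
        pivotRel (fun Y Z => (Y, Z) ∈ F) X X' a b := by
  classical
  by_cases hz : z ∈ ⋃₀ P
  · by_cases hz' : z' ∈ ⋃₀ P
    · simp only [mergedBlock, hz, hz', if_true, Option.mem_def, Option.some.injEq,
        exists_eq_left']
      exact (pivotRel_merge_iff hFsymm hXF hX'F hXX'F _ _).symm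
    · simp [mergedBlock, hz', pivotRel, pair_blockOf_notMem_right hFP hz', xor_def]
  · simp [mergedBlock, hz, pivotRel, pair_blockOf_notMem_left hFP hz,
      pair_blockOf_notMem_right hFP hz, xor_def]

lemma mergedBlock_eq_of_snd_eq {N n : ℕ} {P X X' : Set _} (hP : IsCoarsening P (columnSet N n))
    {z z' : Fin N × Fin n} (h : z.2 = z'.2) : mergedBlock P X X' z = mergedBlock P X X' z' := by
  have hcov : ∀ {z z' : Fin N × Fin n}, z.2 = z'.2 → z ∈ ⋃₀ P →
      z' ∈ ⋃₀ P ∧ blockOf P z = blockOf P z' := by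
    rintro z z' h ⟨Y, hY, hzY⟩
    have hz'Y := hP.mem_of_snd_eq hY hzY h
    exact ⟨⟨Y, hY, hz'Y⟩, by rw [blockOf_eq_of_mem hP.1.2 hY hzY, blockOf_eq_of_mem hP.1.2 hY hz'Y]⟩
  by_cases hz : z ∈ ⋃₀ P
  · obtain ⟨hz', hb⟩ := hcov h hz
    simp [mergedBlock, hz, hz', hb]
  · have hz' : z' ∉ ⋃₀ P := fun hz' => hz (hcov h.symm hz').1
    simp [mergedBlock, hz, hz']

end MergedBlock

/-- A `⋃P`-path from `X` to `X'`. -/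
structure IsSUnionPath {V : Type*} {G : SimpleGraph V} (P : Set (Set V)) (X X' : Set V) {p q : V}
    (w : G.Walk p q) : Prop where
  isPath : w.IsPath
  start_mem : p ∈ X
  end_mem : q ∈ X'
  notMem_sUnion : ∀ z ∈ w.support, z ≠ p → z ≠ q → z ∉ ⋃₀ P

section FlippedPaths

variable {N n : ℕ} {P : Set (Set (Fin N × Fin n))}
  {F : Set (Set (Fin N × Fin n) × Set (Fin N × Fin n))}

lemma collFlip_pathsGraph_adj_iff_of_fst_ne (hFsymm : SymmRelSet F) {z x : Fin N × Fin n}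
    (h : z.1 ≠ x.1) :
    (collFlip (pathsGraph N n) P F).Adj z x ↔ (blockOf P z, blockOf P x) ∈ F :=
  collFlip_adj_iff_of_not_adj hFsymm (fun e => h (congrArg Prod.fst e)) fun hH => h hH.1

lemma collFlip_pathsGraph_adj_iff_of_mem (hP : P.PairwiseDisjoint id) (hFsymm : SymmRelSet F)
    {Y : Set (Fin N × Fin n)} (hY : Y ∈ P) {z x : Fin N × Fin n} (hz : z ∈ Y) (h : z.1 ≠ x.1) :
    (collFlip (pathsGraph N n) P F).Adj z x ↔ (Y, blockOf P x) ∈ F := by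
  rw [collFlip_pathsGraph_adj_iff_of_fst_ne hFsymm h, blockOf_eq_of_mem hP hY hz]

namespace IsSUnionPath

variable {X X' : Set (Fin N × Fin n)} {p q : Fin N × Fin n}
  {w : (collFlip (pathsGraph N n) P F).Walk p q}

lemma getVert_notMem_sUnion (hw : IsSUnionPath P X X' w) {j : ℕ} (h0 : 0 < j)
    (hj : j < w.length) : w.getVert j ∉ ⋃₀ P := by
  refine hw.notMem_sUnion _ (w.getVert_mem_support j) (fun e => ?_) (fun e => ?_)
  · have := hw.isPath.getVert_injOn (show j ≤ w.length by omega)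
      (show 0 ≤ w.length by omega) (e.trans w.getVert_zero.symm)
    omega
  · have := hw.isPath.getVert_injOn (show j ≤ w.length by omega)
      (show w.length ≤ w.length from le_rfl) (e.trans w.getVert_length.symm)
    omega

/-- No two vertices of the path have their flip bit set: inner vertices lie in no part, and
`(X, X') ∉ F`. -/
lemma collFlip_adj_getVert_iff (hw : IsSUnionPath P X X' w) (hP : P.PairwiseDisjoint id)
    (hFP : F ⊆ P ×ˢ P) (hFsymm : SymmRelSet F) (hX : X ∈ P) (hX' : X' ∈ P)
    (hXX'F : (X, X') ∉ F) {j k : ℕ} (hjk : j < k) (hk : k ≤ w.length) :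
    (collFlip (pathsGraph N n) P F).Adj (w.getVert j) (w.getVert k) ↔
      (pathsGraph N n).Adj (w.getVert j) (w.getVert k) := by
  refine collFlip_adj_iff_of_notMem hFsymm ?_
  rcases Nat.eq_zero_or_pos j with rfl | hj
  · rcases hk.lt_or_eq with hk | rfl
    · exact pair_blockOf_notMem_right hFP (hw.getVert_notMem_sUnion hjk hk) _
    · rwa [w.getVert_zero, w.getVert_length, blockOf_eq_of_mem hP hX hw.start_mem,
        blockOf_eq_of_mem hP hX' hw.end_mem]
  · exact pair_blockOf_notMem_left hFP (hw.getVert_notMem_sUnion hj (by omega)) _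

lemma pathsGraph_adj_getVert (hw : IsSUnionPath P X X' w) (hP : P.PairwiseDisjoint id)
    (hFP : F ⊆ P ×ˢ P) (hFsymm : SymmRelSet F) (hX : X ∈ P) (hX' : X' ∈ P)
    (hXX'F : (X, X') ∉ F) {j : ℕ} (hj : j < w.length) :
    (pathsGraph N n).Adj (w.getVert j) (w.getVert (j + 1)) :=
  (hw.collFlip_adj_getVert_iff hP hFP hFsymm hX hX' hXX'F j.lt_succ_self hj).1
    (w.adj_getVert_succ hj)

lemma fst_getVert (hw : IsSUnionPath P X X' w) (hP : P.PairwiseDisjoint id)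
    (hFP : F ⊆ P ×ˢ P) (hFsymm : SymmRelSet F) (hX : X ∈ P) (hX' : X' ∈ P)
    (hXX'F : (X, X') ∉ F) {j : ℕ} (hj : j ≤ w.length) : (w.getVert j).1 = p.1 := by
  rw [pathsGraph_fst_eq_of_adj (v := w.getVert)
    (fun j hj => hw.pathsGraph_adj_getVert hP hFP hFsymm hX hX' hXX'F hj) j hj, w.getVert_zero]

lemma not_adj_getVert (hw : IsSUnionPath P X X' w) (hP : P.PairwiseDisjoint id)
    (hFP : F ⊆ P ×ˢ P) (hFsymm : SymmRelSet F) (hX : X ∈ P) (hX' : X' ∈ P)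
    (hXX'F : (X, X') ∉ F) {j : ℕ} (h0 : 0 < j) (hj : j < w.length) {x : Fin N × Fin n}
    (hx : x.1 ≠ p.1) : ¬ (collFlip (pathsGraph N n) P F).Adj (w.getVert j) x := fun h =>
  pair_blockOf_notMem_left hFP (hw.getVert_notMem_sUnion h0 hj) _ <|
    (collFlip_pathsGraph_adj_iff_of_fst_ne hFsymm
      (by rw [hw.fst_getVert hP hFP hFsymm hX hX' hXX'F hj.le]; exact hx.symm)).1 h

lemma isPivotPath (hw : IsSUnionPath P X X' w) (hP : P.PairwiseDisjoint id)
    (hFP : F ⊆ P ×ˢ P) (hFsymm : SymmRelSet F) (hX : X ∈ P) (hX' : X' ∈ P)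
    (hXX'F : (X, X') ∉ F) {i' : Fin N} :
    IsPivotPath (collFlip (pathsGraph N n) P F) {z | z.1 ≠ p.1 ∧ z.1 ≠ i'}
      {z | (X, blockOf P z) ∈ F} {z | (X', blockOf P z) ∈ F} w.length w.getVert where
  injOn := hw.isPath.getVert_injOn
  notMem j hj h := h.1 (hw.fst_getVert hP hFP hFsymm hX hX' hXX'F hj)
  adj j hj := w.adj_getVert_succ hj
  not_adj j k hk hjk := by
    rw [hw.collFlip_adj_getVert_iff hP hFP hFsymm hX hX' hXX'F (by omega) hk]
    exact pathsGraph_not_adj_of_injOn (v := w.getVert)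
      (fun j hj => hw.pathsGraph_adj_getVert hP hFP hFsymm hX hX' hXX'F hj)
      hw.isPath.getVert_injOn hk hjk
  adj_first x hx := by
    rw [w.getVert_zero]
    exact collFlip_pathsGraph_adj_iff_of_mem hP hFsymm hX hw.start_mem (Ne.symm hx.1)
  adj_second hL := Or.inl fun x hx =>
    hw.not_adj_getVert hP hFP hFsymm hX hX' hXX'F one_pos hL hx.1
  not_adj_inner j h2 hj x hx := hw.not_adj_getVert hP hFP hFsymm hX hX' hXX'F (by omega) hj hx.1
  adj_last x hx := by
    have hrow := hw.fst_getVert hP hFP hFsymm hX hX' hXX'F le_rfl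
    rw [w.getVert_length] at hrow ⊢
    exact collFlip_pathsGraph_adj_iff_of_mem hP hFsymm hX' hw.end_mem (hrow ▸ Ne.symm hx.1)

theorem exists_isPivotPath (hw : IsSUnionPath P X X' w) (hN : 1 < N)
    (hP : IsCoarsening P (columnSet N n)) (hFP : F ⊆ P ×ˢ P) (hFsymm : SymmRelSet F)
    (hX : X ∈ P) (hX' : X' ∈ P) (hXF : (X, X) ∈ F) (hXX'F : (X, X') ∉ F) :
    ∃ i i' : Fin N, i ≠ i' ∧ ∃ t u, IsPivotPath (collFlip (pathsGraph N n) P F)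
      {z | z.1 ≠ i ∧ z.1 ≠ i'} {z | (X, blockOf P z) ∈ F} {z | (X', blockOf P z) ∈ F}
      (2 * t + 1) u := by
  have hdisj := hP.1.2
  have := Fin.nontrivial_iff_two_le.2 hN
  obtain ⟨i', hi'⟩ := exists_ne p.1
  have hpath := hw.isPivotPath hdisj hFP hFsymm hX hX' hXX'F (i' := i')
  refine ⟨p.1, i', hi'.symm, ?_⟩
  obtain ⟨t, ht | ht⟩ := Nat.even_or_odd' w.length
  · have hp'X : (i', p.2) ∈ X := hP.mem_of_snd_eq hX hw.start_mem rfl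
    have hrow := fun {j} => hw.fst_getVert hdisj hFP hFsymm hX hX' hXX'F (j := j)
    refine ⟨t, _, ht ▸ hpath.cons
      (fun hL x hx => hw.not_adj_getVert hdisj hFP hFsymm hX hX' hXX'F one_pos hL hx.1)
      (fun h => h.2 rfl) (fun j hj e => hi' ((congrArg Prod.fst e).trans (hrow hj))) ?_ ?_
      (fun x hx => collFlip_pathsGraph_adj_iff_of_mem hdisj hFsymm hX hp'X (Ne.symm hx.2))⟩
    · rw [w.getVert_zero, collFlip_pathsGraph_adj_iff_of_mem hdisj hFsymm hX hp'X hi',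
        blockOf_eq_of_mem hdisj hX hw.start_mem]
      exact hXF
    · intro j h1 hj
      rw [collFlip_pathsGraph_adj_iff_of_mem hdisj hFsymm hX hp'X (by rw [hrow hj]; exact hi')]
      rcases hj.lt_or_eq with hj | rfl
      · exact pair_blockOf_notMem_right hFP (hw.getVert_notMem_sUnion h1 hj) _
      · rwa [w.getVert_length, blockOf_eq_of_mem hdisj hX' hw.end_mem]
  · exact ⟨t, _, ht ▸ hpath⟩

end IsSUnionPath

end FlippedPaths

lemma exists_equiv_pathsGraph {m m' n : ℕ} (R : Fin m' → Prop) [DecidablePred R]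
    (hR : Fintype.card {r // R r} = m) :
    ∃ e : Fin m × Fin n ≃ {z : Fin m' × Fin n | R z.1}, ∀ x, (e x : Fin m' × Fin n).2 = x.2 ∧
      ∀ y, ((pathsGraph m n).Adj x y ↔ (pathsGraph m' n).Adj (e x) (e y)) := by
  let σ := (Fintype.equivFinOfCardEq hR).symm
  refine ⟨(σ.prodCongr (Equiv.refl _)).trans Equiv.prodSubtypeFstEquivSubtypeProd.symm,
    fun x => ⟨rfl, fun y => ?_⟩⟩
  simp only [pathsGraph_adj]
  exact and_congr_left' ⟨fun h => congrArg (fun r => (σ r : Fin m')) h,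
    fun h => σ.injective (Subtype.ext h)⟩

theorem stmt11_general (m n : ℕ) (k : ℕ)
    (P : Set (Set (Fin (m + 2) × Fin n))) (hP : IsCoarsening P (columnSet (m + 2) n))
    (hPk : P.ncard = k)
    (F : Set (Set (Fin (m + 2) × Fin n) × Set (Fin (m + 2) × Fin n)))
    (hFP : F ⊆ P ×ˢ P) (hFsymm : SymmRelSet F)
    (X X' : Set (Fin (m + 2) × Fin n)) (hX : X ∈ P) (hX' : X' ∈ P) (hXX' : X ≠ X')
    (hXF : (X, X) ∈ F) (hX'F : (X', X') ∈ F) (hXX'F : (X, X') ∉ F)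
    (hpath : ∃ (p q : Fin (m + 2) × Fin n)
        (w : (collFlip (pathsGraph (m + 2) n) P F).Walk p q),
        w.IsPath ∧ p ∈ X ∧ q ∈ X' ∧
        ∀ z ∈ w.support, z ≠ p → z ≠ q → z ∉ ⋃₀ P) :
    ∃ G' : SimpleGraph (Fin m × Fin n), IsKFlippedPaths (k - 1) m n G' ∧
      IsPivotMinorOf G' (collFlip (pathsGraph (m + 2) n) P F) := by
  obtain ⟨p, q, w, hw, hp, hq, hint⟩ := hpath
  obtain ⟨i, i', hii', t, u, hu⟩ := IsSUnionPath.exists_isPivotPath ⟨hw, hp, hq, hint⟩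
    (by omega) hP hFP hFsymm hX hX' hXF hXX'F
  obtain ⟨l, hl, hflip⟩ := hu.exists_validPivots
  obtain ⟨e, he⟩ := exists_equiv_pathsGraph (m := m) (n := n) (fun r => r ≠ i ∧ r ≠ i') (by
    rw [Fintype.card_subtype, ← Finset.filter_filter, Finset.filter_ne', Finset.filter_ne']
    simp [Finset.card_erase_of_mem, hii'.symm])
  refine ⟨((pivotSeq _ l).induce {z : Fin (m + 2) × Fin n | z.1 ≠ i ∧ z.1 ≠ i'}).comap e, ?_,
    l, _, hl, ⟨Iso.comap e _⟩⟩
  refine isKFlippedPaths_of_adj_iff _ (fun x => mergedBlock P X X' (e x))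
    (fun x y h => mergedBlock_eq_of_snd_eq hP (by rw [(he x).1, (he y).1, h]))
    (pivotRel (fun Y Z => (Y, Z) ∈ F) X X') (fun _ _ => pivotRel_symm hFsymm) ?_ fun x y => ?_
  · calc _ ≤ (P \ {X'}).ncard := Set.ncard_le_ncard (by
          rintro a ⟨x, hx⟩
          exact mem_diff_of_mem_mergedBlock hP.1.2 hX hXX' hx)
      _ = k - 1 := by rw [Set.ncard_sdiff_singleton_of_mem hX', hPk]
  · show (pivotSeq _ l).Adj (e x).1 (e y).1 ↔ _
    rw [hflip _ (e x).2 _ (e y).2]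
    simp only [Set.mem_ofPred_eq]
    rw [collFlip_adj_xor_iff hFsymm,
      pivotRel_blockOf_iff hFP hFsymm hXF hX'F hXX'F, ← (he x).2 y]
    simp [Subtype.val_inj, e.injective.eq_iff]

theorem stmt11 (m n : ℕ) (hm : 1 ≤ m) (hn : 1 ≤ n) (k : ℕ) (hk : 2 ≤ k)
    (P : Set (Set (Fin (m + 2) × Fin n))) (hP : IsCoarsening P (columnSet (m + 2) n))
    (hPk : P.ncard = k)
    (F : Set (Set (Fin (m + 2) × Fin n) × Set (Fin (m + 2) × Fin n)))
    (hFP : F ⊆ P ×ˢ P) (hFsymm : SymmRelSet F)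
    (X X' : Set (Fin (m + 2) × Fin n)) (hX : X ∈ P) (hX' : X' ∈ P) (hXX' : X ≠ X')
    (hXF : (X, X) ∈ F) (hX'F : (X', X') ∈ F) (hXX'F : (X, X') ∉ F)
    (hpath : ∃ (p q : Fin (m + 2) × Fin n)
        (w : (collFlip (pathsGraph (m + 2) n) P F).Walk p q),
        w.IsPath ∧ p ∈ X ∧ q ∈ X' ∧
        ∀ z ∈ w.support, z ≠ p → z ≠ q → z ∉ ⋃₀ P) :
    ∃ G' : SimpleGraph (Fin m × Fin n), IsKFlippedPaths (k - 1) m n G' ∧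
      IsPivotMinorOf G' (collFlip (pathsGraph (m + 2) n) P F) :=
  stmt11_general m n k P hP hPk F hFP hFsymm X X' hX hX' hXX' hXF hX'F hXX'F hpath
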